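/- Let κ ∈ ℝ and let P(t) = ∑_{h=0}^{d} p_h t^h be a polynomial with p_d ≠ 0 and κ ≠ 0. Define a_n to be the n-th Taylor coefficient of e^{κt} P(t) at t = 0, i.e. a_n = ∑_{h=0}^{min(d,n)} p_h κ^{n-h}/(n-h)!. Then for every 0 < ε < 1 there exists N such that for all n ≥ N, (|κ|^n/n!)(1-ε)^n < |a_n| < (|κ|^n/n!)(1+ε)^n. -/

import Mathlib

/-!
For `n ≥ d` one has `κ^{n-h}/(n-h)! = (κ^n/n!) · n(n-1)⋯(n-h+1)/κ^h`, so
`a_n = (κ^n/n!) · Q(n)` with `Q = ∑_{h ≤ d} (p_h/κ^h) X(X-1)⋯(X-h+1)`, a polynomial whose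
coefficient of `X^d` is `p_d/κ^d ≠ 0`. A nonzero polynomial grows at least like a constant and
at most like `n^{deg Q}`, so `|Q(n)|` is eventually squeezed strictly between `(1-ε)^n` and
`(1+ε)^n`.
-/

open Filter Finset Polynomial Asymptotics

section Sequences

variable {g : ℕ → ℝ}

lemma eventually_abs_lt_pow_of_isBigO_pow {k : ℕ} {s : ℝ}
    (hg : g =O[atTop] fun n => (n : ℝ) ^ k) (hs : 1 < s) : ∀ᶠ n in atTop, |g n| < s ^ n := by
  filter_upwards [(hg.trans_isLittleO (isLittleO_pow_const_const_pow_of_one_lt k hs)).def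
    one_half_pos] with n hn
  have hpos : 0 < s ^ n := pow_pos (zero_lt_one.trans hs) n
  rw [Real.norm_eq_abs, Real.norm_eq_abs, abs_of_pos hpos] at hn
  linarith

lemma eventually_pow_lt_abs_of_isBigO_one {r : ℝ} (hg : (fun _ => (1 : ℝ)) =O[atTop] g)
    (hr0 : 0 < r) (hr1 : r < 1) : ∀ᶠ n in atTop, r ^ n < |g n| := by
  have hdecay : (fun n : ℕ => r ^ n) =o[atTop] fun _ => (1 : ℝ) :=
    (isLittleO_one_iff ℝ).mpr (tendsto_pow_atTop_nhds_zero_of_lt_one hr0.le hr1)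
  filter_upwards [(hdecay.trans_isBigO hg).def one_half_pos] with n hn
  have hpos : 0 < r ^ n := pow_pos hr0 n
  rw [Real.norm_eq_abs, Real.norm_eq_abs, abs_of_pos hpos] at hn
  linarith

end Sequences

lemma Polynomial.eventually_pow_lt_abs_eval_natCast_lt_pow {Q : ℝ[X]} (hQ : Q ≠ 0) {r s : ℝ}
    (hr0 : 0 < r) (hr1 : r < 1) (hs : 1 < s) :
    ∀ᶠ n : ℕ in atTop, r ^ n < |Q.eval (n : ℝ)| ∧ |Q.eval (n : ℝ)| < s ^ n := by
  have hupper : (fun n : ℕ => Q.eval (n : ℝ)) =O[atTop] fun n => (n : ℝ) ^ Q.natDegree := by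
    simpa [Function.comp_def] using ((Q.isBigO_atTop_of_degree_le (X ^ Q.natDegree)
      (by simp [degree_le_natDegree])).comp_tendsto tendsto_natCast_atTop_atTop)
  have hlower : (fun _ : ℕ => (1 : ℝ)) =O[atTop] fun n : ℕ => Q.eval (n : ℝ) := by
    simpa [Function.comp_def] using (((C 1 : ℝ[X]).isBigO_atTop_of_degree_le Q
      (degree_C_le.trans (zero_le_degree_iff.mpr hQ))).comp_tendsto tendsto_natCast_atTop_atTop)
  exact (eventually_pow_lt_abs_of_isBigO_one hlower hr0 hr1).and
    (eventually_abs_lt_pow_of_isBigO_pow hupper hs)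

section ExpMulPoly

variable {K : Type*} [Field K] (κ : K) (p : ℕ → K) (d : ℕ)

noncomputable def expMulPolyCoeffPoly : K[X] :=
  ∑ h ∈ range (d + 1), C (p h / κ ^ h) * descPochhammer K h

lemma coeff_expMulPolyCoeffPoly_self : (expMulPolyCoeffPoly κ p d).coeff d = p d / κ ^ d := by
  rw [expMulPolyCoeffPoly, finsetSum_coeff, sum_eq_single d]
  · have hlead := (monic_descPochhammer K d).coeff_natDegree
    rw [descPochhammer_natDegree] at hlead
    rw [coeff_C_mul, hlead, mul_one]
  · intro h hh hhd
    have hlt : (descPochhammer K h).natDegree < d := by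
      rw [descPochhammer_natDegree]
      exact lt_of_le_of_ne (Nat.lt_succ_iff.mp (mem_range.mp hh)) hhd
    rw [coeff_C_mul, coeff_eq_zero_of_natDegree_lt hlt, mul_zero]
  · exact fun hd => absurd (self_mem_range_succ d) hd

variable {κ p d}

lemma expMulPolyCoeffPoly_ne_zero (hκ : κ ≠ 0) (hd : p d ≠ 0) : expMulPolyCoeffPoly κ p d ≠ 0 :=
  fun hzero => div_ne_zero hd (pow_ne_zero d hκ) <| by
    rw [← coeff_expMulPolyCoeffPoly_self, hzero, coeff_zero]

lemma sum_mul_pow_div_factorial_eq_mul_eval [CharZero K] (hκ : κ ≠ 0) {n : ℕ} (hn : d ≤ n) :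
    ∑ h ∈ range (d + 1), p h * κ ^ (n - h) / (n - h).factorial =
      κ ^ n / n.factorial * (expMulPolyCoeffPoly κ p d).eval (n : K) := by
  simp only [expMulPolyCoeffPoly, eval_finsetSum, eval_mul, eval_C,
    descPochhammer_eval_eq_descFactorial, mul_sum]
  refine sum_congr rfl fun h hh => ?_
  have hhn : h ≤ n := (Nat.lt_succ_iff.mp (mem_range.mp hh)).trans hn
  have hfact : ((n - h).factorial : K) * n.descFactorial h = n.factorial := by
    exact_mod_cast Nat.factorial_mul_descFactorial hhn
  have hfact_ne : ((n - h).factorial : K) ≠ 0 := Nat.cast_ne_zero.mpr (Nat.factorial_ne_zero _)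
  have hdesc_ne : (n.descFactorial h : K) ≠ 0 :=
    Nat.cast_ne_zero.mpr (Nat.descFactorial_eq_zero_iff_lt.not.mpr hhn.not_gt)
  rw [pow_sub₀ κ hκ hhn, ← hfact]
  field_simp

end ExpMulPoly

/-- If `a_n` is the `n`-th Taylor coefficient of `e^{κt} P(t)` where `P` is a polynomial of
degree `d` with `p_d ≠ 0` and `κ ≠ 0`, then `{|a_n|} ≈ {|κ|^n / n!}` in the `(1±ε)^n`
squeeze sense. -/
theorem taylor_coeff_exp_poly (κ : ℝ) (hκ : κ ≠ 0) (d : ℕ) (p : ℕ → ℝ) (hd : p d ≠ 0)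
    (a : ℕ → ℝ)
    (ha : ∀ n : ℕ, a n = ∑ h ∈ Finset.range (min d n + 1),
      p h * κ ^ (n - h) / Nat.factorial (n - h)) :
    ∀ ε : ℝ, 0 < ε → ε < 1 → ∃ N : ℕ, ∀ n ≥ N,
      (|κ| ^ n / Nat.factorial n) * (1 - ε) ^ n < |a n| ∧
      |a n| < (|κ| ^ n / Nat.factorial n) * (1 + ε) ^ n := by
  intro ε hε0 hε1
  obtain ⟨N, hN⟩ := eventually_atTop.mp
    ((eventually_pow_lt_abs_eval_natCast_lt_pow (r := 1 - ε) (s := 1 + ε)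
      (expMulPolyCoeffPoly_ne_zero hκ hd) (by linarith) (by linarith) (by linarith)).and
      (eventually_ge_atTop d))
  refine ⟨N, fun n hn => ?_⟩
  obtain ⟨⟨hlower, hupper⟩, hdn⟩ := hN n hn
  have hscale : 0 < |κ| ^ n / n.factorial := by positivity
  rw [ha n, min_eq_left hdn, sum_mul_pow_div_factorial_eq_mul_eval hκ hdn, abs_mul, abs_div, abs_pow,
    Nat.abs_cast]
  exact ⟨mul_lt_mul_of_pos_left hlower hscale, mul_lt_mul_of_pos_left hupper hscale⟩
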